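/- arXiv:2504.17236 — 5 statements merged into one kernel-verified Lean document; each statement's English description precedes it below -/
import Mathlib

section
/- The function f(x,y) := ((√x − √y)₊)² is convex on ℝ₊²; that is, for all (x⁰,y⁰), (x¹,y¹) in [0,∞)² and all λ ∈ [0,1], ((√((1−λ)x⁰+λx¹) − √((1−λ)y⁰+λy¹))₊)² ≤ (1−λ)((√x⁰ − √y⁰)₊)² + λ((√x¹ − √y¹)₊)². -/
/-! `((√x − √y)₊)²` is the supremum over `t ∈ (0, 1]` of the linear functions
`(1 − t) x + (1 − 1/t) y` (attained at `t = √y / √x` when `0 < y < x`, approached as `t → 0`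
when `y = 0`), and a supremum of linear functions is convex. -/

open Filter Set Topology

lemma le_max_sqrt_sub_zero_sq {t x y : ℝ} (ht₀ : 0 < t) (ht₁ : t ≤ 1) (hx : 0 ≤ x) (hy : 0 ≤ y) :
    (1 - t) * x + (1 - t⁻¹) * y ≤ max (√x - √y) 0 ^ 2 := by
  obtain ⟨a, ha, rfl⟩ : ∃ a, 0 ≤ a ∧ x = a ^ 2 := ⟨√x, Real.sqrt_nonneg x, (Real.sq_sqrt hx).symm⟩
  obtain ⟨b, hb, rfl⟩ : ∃ b, 0 ≤ b ∧ y = b ^ 2 := ⟨√y, Real.sqrt_nonneg y, (Real.sq_sqrt hy).symm⟩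
  rw [Real.sqrt_sq ha, Real.sqrt_sq hb]
  rcases le_or_gt a b with hab | hab
  · rw [max_eq_right (by linarith), ← sub_nonneg]
    have hta : t * a ^ 2 ≤ b ^ 2 := by nlinarith
    calc 0 ≤ (1 - t) * (b ^ 2 - t * a ^ 2) / t := by
          apply div_nonneg _ ht₀.le
          exact mul_nonneg (sub_nonneg.2 ht₁) (sub_nonneg.2 hta)
      _ = _ := by field_simp; ring
  · rw [max_eq_left (by linarith), ← sub_nonneg]
    calc 0 ≤ (t * a - b) ^ 2 / t := by positivity
      _ = _ := by field_simp; ring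

lemma max_sqrt_sub_zero_sq_le_of_forall {x y c : ℝ} (hy : 0 ≤ y)
    (h : ∀ t ∈ Ioc (0 : ℝ) 1, (1 - t) * x + (1 - t⁻¹) * y ≤ c) :
    max (√x - √y) 0 ^ 2 ≤ c := by
  rcases le_or_gt √x √y with hxy | hxy
  · simpa [max_eq_right (sub_nonpos.2 hxy)] using h 1 ⟨one_pos, le_rfl⟩
  rw [max_eq_left (sub_nonneg.2 hxy.le)]
  have hsx : 0 < √x := (Real.sqrt_nonneg y).trans_lt hxy
  rcases hy.eq_or_lt with rfl | hy
  · rw [Real.sqrt_zero, sub_zero, Real.sq_sqrt (Real.sqrt_pos.1 hsx).le]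
    have hlim : Tendsto (fun t : ℝ ↦ (1 - t) * x) (𝓝[>] 0) (𝓝 x) := by
      have : Continuous fun t : ℝ ↦ (1 - t) * x := by fun_prop
      simpa using (this.tendsto 0).mono_left nhdsWithin_le_nhds
    refine le_of_tendsto hlim ?_
    filter_upwards [Ioc_mem_nhdsGT one_pos] with t ht
    simpa using h t ht
  · have hsy : 0 < √y := Real.sqrt_pos.2 hy
    have key := h (√y / √x) ⟨div_pos hsy hsx, (div_le_one hsx).2 hxy.le⟩
    rw [← Real.sq_sqrt (Real.sqrt_pos.1 hsx).le, ← Real.sq_sqrt hy.le, Real.sqrt_sq hsx.le,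
      Real.sqrt_sq hsy.le] at key ⊢
    convert key using 1
    field_simp
    ring

/-- the function `(x,y) ↦ ((√x − √y)₊)²` is convex on `ℝ₊²`. -/
theorem posPart_sqrt_sub_sq_convex (x₀ y₀ x₁ y₁ lam : ℝ)
    (hx₀ : 0 ≤ x₀) (hy₀ : 0 ≤ y₀) (hx₁ : 0 ≤ x₁) (hy₁ : 0 ≤ y₁)
    (hlam₀ : 0 ≤ lam) (hlam₁ : lam ≤ 1) :
    (max (Real.sqrt ((1 - lam) * x₀ + lam * x₁)
        - Real.sqrt ((1 - lam) * y₀ + lam * y₁)) 0) ^ 2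
      ≤ (1 - lam) * (max (Real.sqrt x₀ - Real.sqrt y₀) 0) ^ 2
        + lam * (max (Real.sqrt x₁ - Real.sqrt y₁) 0) ^ 2 := by
  have hlam : 0 ≤ 1 - lam := sub_nonneg.2 hlam₁
  refine max_sqrt_sub_zero_sq_le_of_forall (by positivity) fun t ⟨ht₀, ht₁⟩ ↦ ?_
  calc (1 - t) * ((1 - lam) * x₀ + lam * x₁) + (1 - t⁻¹) * ((1 - lam) * y₀ + lam * y₁)
      = (1 - lam) * ((1 - t) * x₀ + (1 - t⁻¹) * y₀)
        + lam * ((1 - t) * x₁ + (1 - t⁻¹) * y₁) := by ring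
    _ ≤ _ := by
      gcongr
      · exact le_max_sqrt_sub_zero_sq ht₀ ht₁ hx₀ hy₀
      · exact le_max_sqrt_sub_zero_sq ht₀ ht₁ hx₁ hy₁
end

section
/- Gaussian mutual-information lower bound via second moments: let γ > 0 and let ν be a probability measure on ℝ × ℝ with first marginal N(0,γ) and with second-marginal second moment γ̃ := E_ν[X̃²] satisfying 0 < γ̃ and θ² < γ·γ̃ where θ := E_ν[X·X̃]. Then I_ν ≥ (1/2)·log₂(γ·γ̃ / (γ·γ̃ − θ²)). -/
open MeasureTheory ProbabilityTheory Real
open scoped ENNReal NNReal Classical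

noncomputable section

/-- Kullback–Leibler divergence (in nats), valued in `ℝ≥0∞`. -/
def klDiv' {α : Type*} [MeasurableSpace α] (μ ν : Measure α) : ℝ≥0∞ :=
  if μ ≪ ν ∧ Integrable (llr μ ν) μ then ENNReal.ofReal (∫ x, llr μ ν x ∂μ) else ∞

/-- Mutual information (in nats) of a joint probability measure on a product space.
The mutual information in bits is this quantity divided by `Real.log 2`. -/
def mutualInfo {α β : Type*} [MeasurableSpace α] [MeasurableSpace β]
    (μ : Measure (α × β)) : ℝ≥0∞ :=
  klDiv' μ ((μ.map Prod.fst).prod (μ.map Prod.snd))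

/-- `μ` is a coupling of `p` and `q`. -/
def IsCoupling {α β : Type*} [MeasurableSpace α] [MeasurableSpace β]
    (μ : Measure (α × β)) (p : Measure α) (q : Measure β) : Prop :=
  μ.map Prod.fst = p ∧ μ.map Prod.snd = q

/-- Under `μ`, the conditional expectation of the first coordinate given the σ-algebra
generated by the second coordinate equals the second coordinate a.s. -/
def MMSEProp {E : Type*} [MeasurableSpace E] [NormedAddCommGroup E] [NormedSpace ℝ E]
    [CompleteSpace E] (μ : Measure (E × E)) : Prop :=
  μ[(fun z => z.1) | MeasurableSpace.comap (Prod.snd : E × E → E) inferInstance]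
    =ᵐ[μ] fun z => z.2

/-- The single-letter distortion-rate-perception function `D(R,C,P)`. -/
def DRCP {E : Type*} [MeasurableSpace E] [NormedAddCommGroup E] [NormedSpace ℝ E]
    [CompleteSpace E] (p : Measure E) (R C P : ℝ) : ℝ :=
  sInf { d : ℝ | ∃ (q : Measure E) (μ ν : Measure (E × E)),
    IsProbabilityMeasure q ∧ IsCoupling μ p q ∧ IsCoupling ν p q ∧
    MMSEProp μ ∧
    mutualInfo μ ≤ ENNReal.ofReal (R * Real.log 2) ∧
    mutualInfo ν ≤ ENNReal.ofReal ((R + C) * Real.log 2) ∧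
    Integrable (fun z => ‖z.1 - z.2‖ ^ 2) μ ∧
    Integrable (fun z => ‖z.1 - z.2‖ ^ 2) ν ∧
    d = ∫ z, ‖z.1 - z.2‖ ^ 2 ∂μ
        + (max (Real.sqrt (∫ z, ‖z.1 - z.2‖ ^ 2 ∂ν) - Real.sqrt P) 0) ^ 2 }

/-!
The product of the marginals tilted by `exp g` is a probability measure as soon as
`∫ exp (g (x, y)) d(law of X)(x) = 1` for every `y`, so Gibbs' inequality gives `I_ν ≥ E_ν[g]`
(in nats). Take for `g` the log-density ratio of the Gaussian regression channel
`X ∣ X̃ = y ~ N(α y, s)` against `N(0, γ)`, with `α = θ / γ̃` and `s = γ - θ² / γ̃`.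
Since `E_ν[(X - α X̃)²] = s` and `E_ν[X²] = γ`, the quadratic part of `g` has mean zero under `ν`,
and `E_ν[g] = ½ log (γ / s) = ½ log (γ γ̃ / (γ γ̃ - θ²))`.
-/

theorem integral_sub_log_integral_exp_le_integral_llr {α : Type*} [MeasurableSpace α]
    {μ ν : Measure α} [IsProbabilityMeasure μ] [IsFiniteMeasure ν] {f : α → ℝ}
    (hμν : μ ≪ ν) (hllr : Integrable (llr μ ν) μ) (hfμ : Integrable f μ)
    (hfν : Integrable (fun x ↦ exp (f x)) ν) :
    ∫ x, f x ∂μ - log (∫ x, exp (f x) ∂ν) ≤ ∫ x, llr μ ν x ∂μ := by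
  have : NeZero ν := ⟨by
    rintro rfl
    exact IsProbabilityMeasure.ne_zero μ (Measure.absolutelyContinuous_zero_iff.1 hμν)⟩
  have := isProbabilityMeasure_tilted hfν
  have hgibbs := InformationTheory.integral_llr_add_sub_measure_univ_nonneg
    (hμν.trans (absolutelyContinuous_tilted hfν)) (integrable_llr_tilted_right hμν hfμ hllr hfν)
  rw [integral_llr_tilted_right hμν hfμ hfν hllr] at hgibbs
  simp only [probReal_univ] at hgibbs
  linarith

theorem ofReal_integral_sub_log_integral_exp_le_klDiv' {α : Type*} [MeasurableSpace α]
    {μ ν : Measure α} [IsProbabilityMeasure μ] [IsFiniteMeasure ν] {f : α → ℝ}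
    (hfμ : Integrable f μ) (hfν : Integrable (fun x ↦ exp (f x)) ν) :
    ENNReal.ofReal (∫ x, f x ∂μ - log (∫ x, exp (f x) ∂ν)) ≤ klDiv' μ ν := by
  unfold klDiv'
  split_ifs with h
  · exact ENNReal.ofReal_le_ofReal
      (integral_sub_log_integral_exp_le_integral_llr h.1 h.2 hfμ hfν)
  · exact le_top

theorem ofReal_integral_le_mutualInfo {α β : Type*} [MeasurableSpace α] [MeasurableSpace β]
    {ν : Measure (α × β)} [IsProbabilityMeasure ν] {g : α × β → ℝ}
    (hg : Measurable g) (hgν : Integrable g ν)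
    (hexp : ∀ y, ∫⁻ x, ENNReal.ofReal (exp (g (x, y))) ∂(ν.map Prod.fst) = 1) :
    ENNReal.ofReal (∫ z, g z ∂ν) ≤ mutualInfo ν := by
  unfold mutualInfo
  set marginals := (ν.map Prod.fst).prod (ν.map Prod.snd)
  have hexp_meas : Measurable fun z ↦ exp (g z) := hg.exp
  have hlint : ∫⁻ z, ENNReal.ofReal (exp (g z)) ∂marginals = 1 := by
    rw [lintegral_prod_symm _ hexp_meas.ennreal_ofReal.aemeasurable]
    simp [hexp, Measure.map_apply measurable_snd MeasurableSet.univ]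
  have hexp_int : Integrable (fun z ↦ exp (g z)) marginals :=
    ⟨hexp_meas.aestronglyMeasurable, by
      rw [hasFiniteIntegral_iff_ofReal (.of_forall fun z ↦ (exp_pos _).le), hlint]
      exact ENNReal.one_lt_top⟩
  have hint : ∫ z, exp (g z) ∂marginals = 1 := by
    rw [integral_eq_lintegral_of_nonneg_ae (.of_forall fun z ↦ (exp_pos _).le)
      hexp_meas.aestronglyMeasurable, hlint, ENNReal.toReal_one]
  simpa [hint] using ofReal_integral_sub_log_integral_exp_le_klDiv' hgν hexp_int

theorem integrable_sq_gaussianReal (μ : ℝ) (v : ℝ≥0) :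
    Integrable (fun x ↦ x ^ 2) (gaussianReal μ v) :=
  (memLp_id_gaussianReal 2).integrable_sq

theorem integral_sq_gaussianReal_zero (v : ℝ≥0) : ∫ x, x ^ 2 ∂gaussianReal 0 v = v := by
  rw [← variance_of_integral_eq_zero aemeasurable_id' integral_id_gaussianReal,
    variance_fun_id_gaussianReal]

theorem exp_log_div_two_eq_sqrt {x : ℝ} (hx : 0 < x) : exp (log x / 2) = √x := by
  rw [sqrt_eq_rpow, rpow_def_of_pos hx]
  ring_nf

/-- `log (gaussianPDFReal m s x / gaussianPDFReal 0 v x)`, written out. -/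
def gaussianLogRatio (v s : ℝ≥0) (m x : ℝ) : ℝ :=
  log (v / s) / 2 - (x - m) ^ 2 / (2 * s) + x ^ 2 / (2 * v)

theorem gaussianPDFReal_mul_exp_gaussianLogRatio {v s : ℝ≥0} (hv : v ≠ 0) (hs : s ≠ 0)
    (m x : ℝ) :
    gaussianPDFReal 0 v x * exp (gaussianLogRatio v s m x) = gaussianPDFReal m s x := by
  have hv : (0 : ℝ) < v := by positivity
  have hs : (0 : ℝ) < s := by positivity
  have hcancel : exp (-x ^ 2 / (2 * v)) * exp (x ^ 2 / (2 * v)) = 1 := by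
    rw [← exp_add, neg_div, neg_add_cancel, exp_zero]
  have hconst : (√(2 * π * v))⁻¹ * √(v / s) = (√(2 * π * s))⁻¹ := by
    rw [sqrt_div hv.le, sqrt_mul (by positivity) (v : ℝ), sqrt_mul (by positivity) (s : ℝ)]
    have : √(v : ℝ) ≠ 0 := (sqrt_pos.2 hv).ne'
    field_simp
  rw [gaussianLogRatio, show log (v / s) / 2 - (x - m) ^ 2 / (2 * s) + x ^ 2 / (2 * v)
      = log (v / s) / 2 + -(x - m) ^ 2 / (2 * s) + x ^ 2 / (2 * v) by ring,
    exp_add, exp_add, exp_log_div_two_eq_sqrt (by positivity)]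
  simp only [gaussianPDFReal_def, sub_zero]
  calc (√(2 * π * v))⁻¹ * exp (-x ^ 2 / (2 * v))
        * (√(v / s) * exp (-(x - m) ^ 2 / (2 * s)) * exp (x ^ 2 / (2 * v)))
      = (√(2 * π * v))⁻¹ * √(v / s) * (exp (-x ^ 2 / (2 * v)) * exp (x ^ 2 / (2 * v)))
        * exp (-(x - m) ^ 2 / (2 * s)) := by ring
    _ = (√(2 * π * s))⁻¹ * exp (-(x - m) ^ 2 / (2 * s)) := by rw [hcancel, hconst, mul_one]

theorem lintegral_exp_gaussianLogRatio {v s : ℝ≥0} (hv : v ≠ 0) (hs : s ≠ 0) (m : ℝ) :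
    ∫⁻ x, ENNReal.ofReal (exp (gaussianLogRatio v s m x)) ∂gaussianReal 0 v = 1 := by
  rw [gaussianReal_of_var_ne_zero 0 hv, lintegral_withDensity_eq_lintegral_mul _
    (measurable_gaussianPDF 0 v) (by unfold gaussianLogRatio; fun_prop)]
  simp only [Pi.mul_apply, gaussianPDF_def, ← ENNReal.ofReal_mul (gaussianPDFReal_nonneg 0 v _),
    gaussianPDFReal_mul_exp_gaussianLogRatio hv hs]
  exact lintegral_gaussianPDFReal_eq_one m hs

section SecondMoments

variable {ν : Measure (ℝ × ℝ)}

theorem integrable_fst_mul_snd (h₁ : Integrable (fun z ↦ z.1 ^ 2) ν)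
    (h₂ : Integrable (fun z ↦ z.2 ^ 2) ν) : Integrable (fun z ↦ z.1 * z.2) ν :=
  ((memLp_two_iff_integrable_sq measurable_fst.aestronglyMeasurable).2 h₁).integrable_mul
    ((memLp_two_iff_integrable_sq measurable_snd.aestronglyMeasurable).2 h₂)

theorem integrable_fst_sub_mul_snd_sq (h₁ : Integrable (fun z ↦ z.1 ^ 2) ν)
    (h₂ : Integrable (fun z ↦ z.2 ^ 2) ν) (a : ℝ) :
    Integrable (fun z ↦ (z.1 - a * z.2) ^ 2) ν :=
  (((memLp_two_iff_integrable_sq measurable_fst.aestronglyMeasurable).2 h₁).sub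
    (((memLp_two_iff_integrable_sq measurable_snd.aestronglyMeasurable).2 h₂).const_mul
      a)).integrable_sq

theorem integral_fst_sub_mul_snd_sq (h₁ : Integrable (fun z ↦ z.1 ^ 2) ν)
    (h₂ : Integrable (fun z ↦ z.2 ^ 2) ν) (a : ℝ) :
    ∫ z, (z.1 - a * z.2) ^ 2 ∂ν
      = ∫ z, z.1 ^ 2 ∂ν - 2 * a * ∫ z, z.1 * z.2 ∂ν + a ^ 2 * ∫ z, z.2 ^ 2 ∂ν := by
  have h₁₂ := (integrable_fst_mul_snd h₁ h₂).const_mul (2 * a)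
  have hexpand : (fun z : ℝ × ℝ ↦ (z.1 - a * z.2) ^ 2)
      = fun z ↦ z.1 ^ 2 - 2 * a * (z.1 * z.2) + a ^ 2 * z.2 ^ 2 := by
    ext; ring
  rw [hexpand, integral_add (by exact h₁.sub h₁₂) (h₂.const_mul _), integral_sub h₁ h₁₂,
    integral_const_mul, integral_const_mul]

theorem integral_fst_sub_regression_sq (h₁ : Integrable (fun z ↦ z.1 ^ 2) ν)
    (h₂ : Integrable (fun z ↦ z.2 ^ 2) ν) (h₂_ne : ∫ z, z.2 ^ 2 ∂ν ≠ 0) :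
    ∫ z, (z.1 - (∫ w, w.1 * w.2 ∂ν) / (∫ w, w.2 ^ 2 ∂ν) * z.2) ^ 2 ∂ν
      = ∫ z, z.1 ^ 2 ∂ν - (∫ z, z.1 * z.2 ∂ν) ^ 2 / ∫ z, z.2 ^ 2 ∂ν := by
  rw [integral_fst_sub_mul_snd_sq h₁ h₂]
  field_simp
  ring

variable [IsProbabilityMeasure ν]

theorem integrable_gaussianLogRatio (h₁ : Integrable (fun z ↦ z.1 ^ 2) ν)
    (h₂ : Integrable (fun z ↦ z.2 ^ 2) ν) (v s : ℝ≥0) (a : ℝ) :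
    Integrable (fun z ↦ gaussianLogRatio v s (a * z.2) z.1) ν :=
  ((integrable_const _).sub ((integrable_fst_sub_mul_snd_sq h₁ h₂ a).div_const _)).add
    (h₁.div_const _)

theorem integral_gaussianLogRatio (h₁ : Integrable (fun z ↦ z.1 ^ 2) ν)
    (h₂ : Integrable (fun z ↦ z.2 ^ 2) ν) (v s : ℝ≥0) (a : ℝ) :
    ∫ z, gaussianLogRatio v s (a * z.2) z.1 ∂ν
      = log (v / s) / 2 - (∫ z, (z.1 - a * z.2) ^ 2 ∂ν) / (2 * s)
        + (∫ z, z.1 ^ 2 ∂ν) / (2 * v) := by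
  have hres := (integrable_fst_sub_mul_snd_sq h₁ h₂ a).div_const (2 * (s : ℝ))
  simp only [gaussianLogRatio]
  rw [integral_add (by exact (integrable_const _).sub hres) (h₁.div_const _),
    integral_sub (integrable_const _) hres, integral_const, integral_div, integral_div,
    probReal_univ, one_smul]

end SecondMoments

theorem integrable_fst_sq_of_map_fst_eq_gaussianReal {β : Type*} [MeasurableSpace β]
    {ν : Measure (ℝ × β)} {μ : ℝ} {v : ℝ≥0} (h : ν.map Prod.fst = gaussianReal μ v) :
    Integrable (fun z ↦ z.1 ^ 2) ν := by
  have hsq := integrable_sq_gaussianReal μ v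
  rw [← h] at hsq
  exact hsq.comp_measurable measurable_fst

theorem integral_fst_sq_of_map_fst_eq_gaussianReal {β : Type*} [MeasurableSpace β]
    {ν : Measure (ℝ × β)} {v : ℝ≥0} (h : ν.map Prod.fst = gaussianReal 0 v) :
    ∫ z, z.1 ^ 2 ∂ν = v := by
  rw [← integral_sq_gaussianReal_zero v, ← h,
    integral_map measurable_fst.aemeasurable (by fun_prop)]

/-- **Gaussian mutual-information lower bound via second moments**:
if `ν` has first marginal `N(0,γ)`, second-marginal second moment `γ̃ > 0`, and
`θ := E_ν[X·X̃]` with `θ² < γγ̃`, then `I_ν ≥ (1/2)log₂(γγ̃/(γγ̃ − θ²))` (in bits,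
i.e. the KL divergence in nats is at least that quantity times `ln 2`). -/
theorem gaussian_mutual_info_lower_bound (γ : ℝ≥0) (hγ : 0 < γ)
    (ν : Measure (ℝ × ℝ)) (hν : IsProbabilityMeasure ν)
    (hfst : ν.map Prod.fst = gaussianReal 0 γ)
    (hint : Integrable (fun z => z.2 ^ 2) ν)
    (γt θ : ℝ) (hγt : γt = ∫ z, z.2 ^ 2 ∂ν) (hθ : θ = ∫ z, z.1 * z.2 ∂ν)
    (hγtpos : 0 < γt) (hθlt : θ ^ 2 < (γ : ℝ) * γt) :
    ENNReal.ofReal ((1 / 2) * Real.logb 2 ((γ : ℝ) * γt / ((γ : ℝ) * γt - θ ^ 2))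
        * Real.log 2)
      ≤ mutualInfo ν := by
  have hs_pos : 0 < (γ : ℝ) - θ ^ 2 / γt := by rw [sub_pos, div_lt_iff₀ hγtpos]; linarith
  set s : ℝ≥0 := ⟨(γ : ℝ) - θ ^ 2 / γt, hs_pos.le⟩
  have hs_coe : (s : ℝ) = γ - θ ^ 2 / γt := rfl
  have hs : s ≠ 0 := fun h ↦ hs_pos.ne' (congrArg NNReal.toReal h)
  have hx2 := integrable_fst_sq_of_map_fst_eq_gaussianReal hfst
  have hres : ∫ z, (z.1 - θ / γt * z.2) ^ 2 ∂ν = s := by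
    rw [hθ, hγt, integral_fst_sub_regression_sq hx2 hint (hγt ▸ hγtpos.ne'),
      integral_fst_sq_of_map_fst_eq_gaussianReal hfst, ← hθ, ← hγt, hs_coe]
  have hmean : ∫ z, gaussianLogRatio γ s (θ / γt * z.2) z.1 ∂ν = log (γ / s) / 2 := by
    rw [integral_gaussianLogRatio hx2 hint, hres, integral_fst_sq_of_map_fst_eq_gaussianReal hfst]
    field_simp
    ring
  have hratio : (γ : ℝ) * γt / ((γ : ℝ) * γt - θ ^ 2) = γ / s := by
    rw [hs_coe, div_eq_div_iff (by linarith) hs_pos.ne']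
    field_simp
  rw [hratio, logb, mul_assoc, div_mul_cancel₀ _ (log_pos one_lt_two).ne',
    show 1 / 2 * log (γ / s) = log (γ / s) / 2 by ring, ← hmean]
  refine ofReal_integral_le_mutualInfo (by unfold gaussianLogRatio; fun_prop)
    (integrable_gaussianLogRatio hx2 hint γ s _) fun y ↦ ?_
  rw [hfst]
  exact lintegral_exp_gaussianLogRatio hγ.ne' hs (θ / γt * y)
end
end

section
/- Total variation bound under conditioning: let q and p be probability measures on a measurable space, and let B be a measurable set with q(B) > 0 and p(B) > 0. Then ‖q − p‖_TV ≥ min(q(B), p(B)) · ‖q(·|B) − p(·|B)‖_TV, where q(·|B) and p(·|B) are the conditional probability measures given B (i.e., q(A|B) = q(A ∩ B)/q(B)). -/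
/-!
Fix a measurable `E` and write `a = q(B)`, `b = p(B)`, `x = q(B ∩ E)`, `y = p(B ∩ E)`. The scaled
conditional gap `min(a, b) (x/a - y/b)` is at most `x - y = q(B ∩ E) - p(B ∩ E)` when `b ≤ a`, and at
most `(b - y) - (a - x) = p(B \ E) - q(B \ E)` when `a ≤ b`; the latter is the gap of `q - p` on
the complement of `B \ E`. Both are bounded by `‖q - p‖_TV`.
-/

open MeasureTheory ProbabilityTheory
open scoped ENNReal

noncomputable section

def tvDist {α : Type*} [MeasurableSpace α] (q p : Measure α) : ℝ :=
  sSup { d : ℝ | ∃ E : Set α, MeasurableSet E ∧ d = (q E).toReal - (p E).toReal }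

namespace ProbabilityTheory

theorem cond_real_apply {Ω : Type*} [MeasurableSpace Ω] {s : Set Ω} (hs : MeasurableSet s)
    (μ : Measure Ω) (t : Set Ω) : μ[|s].real t = μ.real (s ∩ t) / μ.real s := by
  simp only [Measure.real, cond_apply hs, ENNReal.toReal_mul, ENNReal.toReal_inv, div_eq_inv_mul]

end ProbabilityTheory

section tvDist

variable {α : Type*} [MeasurableSpace α]

theorem le_tvDist (q p : Measure α) [IsFiniteMeasure q] {E : Set α} (hE : MeasurableSet E) :
    q.real E - p.real E ≤ tvDist q p :=
  le_csSup ⟨q.real Set.univ, by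
    rintro _ ⟨F, -, rfl⟩
    show q.real F - p.real F ≤ _
    linarith [measureReal_mono (μ := q) (Set.subset_univ F), measureReal_nonneg (μ := p) (s := F)]⟩
    ⟨E, hE, rfl⟩

theorem le_tvDist_swap (q p : Measure α) [IsProbabilityMeasure q] [IsProbabilityMeasure p]
    {E : Set α} (hE : MeasurableSet E) : p.real E - q.real E ≤ tvDist q p := by
  have h := le_tvDist q p hE.compl
  rwa [probReal_compl_eq_one_sub hE, probReal_compl_eq_one_sub hE, sub_sub_sub_cancel_left] at h

theorem tvDist_le {q p : Measure α} {c : ℝ}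
    (h : ∀ E, MeasurableSet E → q.real E - p.real E ≤ c) : tvDist q p ≤ c :=
  csSup_le ⟨_, ∅, MeasurableSet.empty, rfl⟩ fun _ ⟨E, hE, hd⟩ => hd ▸ h E hE

end tvDist

theorem min_mul_div_sub_div_le {a b x y : ℝ} (ha : 0 < a) (hb : 0 < b) (hx : 0 ≤ x)
    (hyb : y ≤ b) : min a b * (x / a - y / b) ≤ max (x - y) ((b - y) - (a - x)) := by
  have hu : 0 ≤ x / a := div_nonneg hx ha.le
  have hv : y / b ≤ 1 := (div_le_one hb).2 hyb
  obtain ⟨u, rfl⟩ : ∃ u, x = a * u := ⟨x / a, by field_simp⟩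
  obtain ⟨v, rfl⟩ : ∃ v, y = b * v := ⟨y / b, by field_simp⟩
  rw [mul_div_cancel_left₀ u ha.ne'] at hu ⊢
  rw [mul_div_cancel_left₀ v hb.ne'] at hv ⊢
  rcases le_total a b with hab | hba
  · rw [min_eq_left hab]
    exact le_max_of_le_right (by nlinarith)
  · rw [min_eq_right hba]
    exact le_max_of_le_left (by nlinarith)

/-- **total variation bound under conditioning**:
`‖q − p‖_TV ≥ min(q(B), p(B)) · ‖q(·|B) − p(·|B)‖_TV`. -/
theorem tv_bound_under_conditioning {α : Type*} [MeasurableSpace α]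
    (q p : Measure α) [IsProbabilityMeasure q] [IsProbabilityMeasure p]
    (B : Set α) (hB : MeasurableSet B) (hqB : 0 < q B) (hpB : 0 < p B) :
    min (q B).toReal (p B).toReal * tvDist (ProbabilityTheory.cond q B)
        (ProbabilityTheory.cond p B)
      ≤ tvDist q p := by
  show min (q.real B) (p.real B) * tvDist q[|B] p[|B] ≤ tvDist q p
  have hqB' : 0 < q.real B := ENNReal.toReal_pos hqB.ne' (measure_ne_top q B)
  have hpB' : 0 < p.real B := ENNReal.toReal_pos hpB.ne' (measure_ne_top p B)
  have hm : 0 < min (q.real B) (p.real B) := lt_min hqB' hpB'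
  rw [← le_div_iff₀' hm]
  refine tvDist_le fun E hE => ?_
  rw [le_div_iff₀' hm]
  rw [cond_real_apply hB, cond_real_apply hB]
  calc _ ≤ max (q.real (B ∩ E) - p.real (B ∩ E))
        ((p.real B - p.real (B ∩ E)) - (q.real B - q.real (B ∩ E))) :=
        min_mul_div_sub_div_le hqB' hpB' measureReal_nonneg (measureReal_mono Set.inter_subset_left)
    _ ≤ tvDist q p := by
      rw [← eq_sub_of_add_eq' (measureReal_inter_add_sdiff (μ := p) hE),
        ← eq_sub_of_add_eq' (measureReal_inter_add_sdiff (μ := q) hE)]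
      exact max_le (le_tvDist q p (hB.inter hE)) (le_tvDist_swap q p (hB.diff hE))
end
end

section
/- Wasserstein-2 distance bounded by total variation plus tails: let q and p be probability measures on ℝ^d with finite second moments, let r > 0, and let B_r := {y ∈ ℝ^d : ‖y‖ ≤ r}. Then W₂²(q,p) ≤ 4r²·‖q − p‖_TV + 2∫_{B_r^c} ‖y‖² dq(y) + 2∫_{B_r^c} ‖y‖² dp(y) + 2(1 − p(B_r))·∫ ‖y‖² dq(y) + 2(1 − q(B_r))·∫ ‖y‖² dp(y). -/
open MeasureTheory ProbabilityTheory Real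
open scoped ENNReal NNReal Classical

noncomputable section

/-- Squared Wasserstein-2 distance (valued in `ℝ≥0∞`) between measures on a normed space,
with cost `‖y − y'‖²`. -/
def W2sq {α : Type*} [MeasurableSpace α] [NormedAddCommGroup α]
    (p q : Measure α) : ℝ≥0∞ :=
  ⨅ (μ : Measure (α × α)) (_ : IsCoupling μ p q),
    ∫⁻ z, ENNReal.ofReal (‖z.1 - z.2‖ ^ 2) ∂μ

/-!
Write `q = m + q₀` and `p = m + p₀` with `q₀ ⟂ₘ p₀`, where `m` has density `min (dq/dλ) (dp/dλ)`
for `λ = q + p`; the mass `δ = q₀(univ) = p₀(univ)` left over is then at most `‖q − p‖_TV`.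
Keep `m` on the diagonal and couple `q₀` with `p₀` independently: the cost is
`δ⁻¹ ∫ ‖x − y‖² d(q₀ ⊗ p₀) ≤ 2 ∫ ‖y‖² dq₀ + 2 ∫ ‖y‖² dp₀`, and splitting each integral at the
ball `B_r` bounds it by `r² δ` plus the tail of `q`, resp. `p`.
-/

open Set Metric

namespace MeasureTheory.Measure

variable {α : Type*} [MeasurableSpace α]

theorem exists_add_eq_add_eq_mutuallySingular (q p : Measure α) [SigmaFinite q] [SigmaFinite p] :
    ∃ m q₀ p₀ : Measure α, m + q₀ = q ∧ m + p₀ = p ∧ q₀ ⟂ₘ p₀ := by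
  set f := q.rnDeriv (q + p)
  set g := p.rnDeriv (q + p)
  have hf : Measurable f := measurable_rnDeriv _ _
  have hg : Measurable g := measurable_rnDeriv _ _
  refine ⟨(q + p).withDensity (f ⊓ g), (q + p).withDensity (f - f ⊓ g),
    (q + p).withDensity (g - f ⊓ g), ?_, ?_, ⟨{x | f x ≤ g x}, measurableSet_le hf hg, ?_, ?_⟩⟩
  · rw [← withDensity_add_right _ (hf.sub (hf.inf hg)), add_tsub_cancel_of_le inf_le_left,
      withDensity_rnDeriv_eq _ _ (absolutelyContinuous_of_le (Measure.le_add_right le_rfl))]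
  · rw [← withDensity_add_right _ (hg.sub (hf.inf hg)), add_tsub_cancel_of_le inf_le_right,
      withDensity_rnDeriv_eq _ _ (absolutelyContinuous_of_le (Measure.le_add_left le_rfl))]
  · refine (withDensity_apply_eq_zero' (hf.sub (hf.inf hg)).aemeasurable).2
      (measure_mono_null ?_ measure_empty)
    rintro x ⟨hne, hle : f x ≤ g x⟩
    exact hne (by simp [inf_eq_left.2 hle])
  · refine (withDensity_apply_eq_zero' (hg.sub (hf.inf hg)).aemeasurable).2
      (measure_mono_null ?_ measure_empty)
    rintro x ⟨hne, hlt : ¬f x ≤ g x⟩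
    exact hne (by simp [inf_eq_right.2 (not_le.1 hlt).le])

theorem inv_measure_univ_mul_smul (ν : Measure α) [IsFiniteMeasure ν] :
    ((ν univ)⁻¹ * ν univ) • ν = ν := by
  rcases eq_or_ne ν 0 with rfl | hν
  · simp
  · rw [ENNReal.inv_mul_cancel (by simpa using hν) (measure_ne_top _ _), one_smul]

end MeasureTheory.Measure

section TotalVariation

variable {α : Type*} [MeasurableSpace α]

theorem sub_le_tvDist {q : Measure α} [IsFiniteMeasure q] (p : Measure α) {E : Set α}
    (hE : MeasurableSet E) : (q E).toReal - (p E).toReal ≤ tvDist q p := by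
  refine le_csSup ⟨(q univ).toReal, ?_⟩ ⟨E, hE, rfl⟩
  rintro _ ⟨F, -, rfl⟩
  have := ENNReal.toReal_mono (measure_ne_top q univ) (measure_mono (μ := q) (subset_univ F))
  linarith [(p F).toReal_nonneg]

theorem toReal_measure_univ_le_tvDist {m q₀ p₀ : Measure α} [IsFiniteMeasure m]
    [IsFiniteMeasure q₀] [IsFiniteMeasure p₀] (h : q₀ ⟂ₘ p₀) :
    (q₀ univ).toReal ≤ tvDist (m + q₀) (m + p₀) := by
  obtain ⟨s, hs, hq₀s, hp₀s⟩ := h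
  have hq₀ : q₀ sᶜ = q₀ univ := by rw [measure_compl hs (measure_ne_top _ _), hq₀s, tsub_zero]
  have := sub_le_tvDist (q := m + q₀) (m + p₀) hs.compl
  rwa [Measure.add_apply, Measure.add_apply, hp₀s, hq₀, add_zero,
    ENNReal.toReal_add (measure_ne_top _ _) (measure_ne_top _ _), add_sub_cancel_left] at this

end TotalVariation

section Coupling

variable {α : Type*} [MeasurableSpace α]

/-- If `q₀ = 0` then `(q₀ univ)⁻¹ = ∞`, but it multiplies the zero measure. -/
def overlapCoupling (m q₀ p₀ : Measure α) : Measure (α × α) :=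
  m.map (fun y => (y, y)) + (q₀ univ)⁻¹ • q₀.prod p₀

theorem isCoupling_overlapCoupling (m : Measure α) {q₀ p₀ : Measure α} [IsFiniteMeasure q₀]
    [IsFiniteMeasure p₀] (h : q₀ univ = p₀ univ) :
    IsCoupling (overlapCoupling m q₀ p₀) (m + q₀) (m + p₀) := by
  have hdiag : Measurable fun y : α => (y, y) := measurable_id.prodMk measurable_id
  constructor
  · rw [overlapCoupling, Measure.map_add _ _ measurable_fst, Measure.map_smul,
      Measure.map_map measurable_fst hdiag, Measure.map_fst_prod, smul_smul, ← h,
      Measure.inv_measure_univ_mul_smul]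
    exact congrArg (· + _) Measure.map_id
  · rw [overlapCoupling, Measure.map_add _ _ measurable_snd, Measure.map_smul,
      Measure.map_map measurable_snd hdiag, Measure.map_snd_prod, smul_smul, h,
      Measure.inv_measure_univ_mul_smul]
    exact congrArg (· + _) Measure.map_id

end Coupling

theorem lintegral_prod_fst_add_snd {α β : Type*} [MeasurableSpace α] [MeasurableSpace β]
    (μ : Measure α) (ν : Measure β) [SFinite μ] [SFinite ν] {f : α → ℝ≥0∞} {g : β → ℝ≥0∞}
    (hf : Measurable f) (hg : Measurable g) :
    ∫⁻ z, f z.1 + g z.2 ∂μ.prod ν = ν univ * ∫⁻ x, f x ∂μ + μ univ * ∫⁻ y, g y ∂ν := by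
  rw [lintegral_add_left (f := fun z : α × β => f z.1) (hf.comp measurable_fst),
    ← lintegral_map hf measurable_fst, ← lintegral_map hg measurable_snd, Measure.map_fst_prod,
    Measure.map_snd_prod, lintegral_smul_measure, lintegral_smul_measure, smul_eq_mul, smul_eq_mul]

theorem ofReal_norm_sub_sq_le {α : Type*} [SeminormedAddCommGroup α] (x y : α) :
    ENNReal.ofReal (‖x - y‖ ^ 2) ≤ 2 * ENNReal.ofReal (‖x‖ ^ 2) + 2 * ENNReal.ofReal (‖y‖ ^ 2) := by
  have h : ‖x - y‖ ^ 2 ≤ 2 * ‖x‖ ^ 2 + 2 * ‖y‖ ^ 2 := by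
    nlinarith [norm_sub_le x y, norm_nonneg (x - y), sq_nonneg (‖x‖ - ‖y‖)]
  calc ENNReal.ofReal (‖x - y‖ ^ 2) ≤ ENNReal.ofReal (2 * ‖x‖ ^ 2 + 2 * ‖y‖ ^ 2) :=
        ENNReal.ofReal_le_ofReal h
    _ = 2 * ENNReal.ofReal (‖x‖ ^ 2) + 2 * ENNReal.ofReal (‖y‖ ^ 2) := by
        rw [ENNReal.ofReal_add (by positivity) (by positivity), ENNReal.ofReal_mul zero_le_two,
          ENNReal.ofReal_mul zero_le_two, ENNReal.ofReal_ofNat]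

section Tails

variable {α : Type*} [NormedAddCommGroup α] [MeasurableSpace α] [OpensMeasurableSpace α]

theorem W2sq_add_le (m : Measure α) {q₀ p₀ : Measure α} [IsFiniteMeasure q₀]
    [IsFiniteMeasure p₀] (h : q₀ univ = p₀ univ) :
    W2sq (m + q₀) (m + p₀)
      ≤ 2 * ∫⁻ y, ENNReal.ofReal (‖y‖ ^ 2) ∂q₀ + 2 * ∫⁻ y, ENNReal.ofReal (‖y‖ ^ 2) ∂p₀ := by
  set N : α → ℝ≥0∞ := fun y => ENNReal.ofReal (‖y‖ ^ 2)
  have hN : Measurable N := (measurable_norm.pow_const 2).ennreal_ofReal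
  have hdiag : ∫⁻ z, ENNReal.ofReal (‖z.1 - z.2‖ ^ 2) ∂m.map (fun y => (y, y)) = 0 :=
    nonpos_iff_eq_zero.1 ((lintegral_map_le _ _).trans_eq (by simp))
  calc W2sq (m + q₀) (m + p₀)
      ≤ ∫⁻ z, ENNReal.ofReal (‖z.1 - z.2‖ ^ 2) ∂overlapCoupling m q₀ p₀ :=
        iInf₂_le (overlapCoupling m q₀ p₀) (isCoupling_overlapCoupling m h)
    _ = (q₀ univ)⁻¹ * ∫⁻ z, ENNReal.ofReal (‖z.1 - z.2‖ ^ 2) ∂q₀.prod p₀ := by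
        rw [overlapCoupling, lintegral_add_measure, lintegral_smul_measure, hdiag, zero_add,
          smul_eq_mul]
    _ ≤ (q₀ univ)⁻¹ * ∫⁻ z, 2 * N z.1 + 2 * N z.2 ∂q₀.prod p₀ := by
        gcongr with z
        exact ofReal_norm_sub_sq_le z.1 z.2
    _ = ((q₀ univ)⁻¹ * q₀ univ) * (2 * ∫⁻ y, N y ∂q₀ + 2 * ∫⁻ y, N y ∂p₀) := by
        rw [lintegral_prod_fst_add_snd _ _ (hN.const_mul 2) (hN.const_mul 2),
          lintegral_const_mul _ hN, lintegral_const_mul _ hN, ← h]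
        ring
    _ ≤ 2 * ∫⁻ y, N y ∂q₀ + 2 * ∫⁻ y, N y ∂p₀ :=
        mul_le_of_le_one_left zero_le (ENNReal.inv_mul_le_one _)

theorem lintegral_ofReal_norm_sq_le {ν q : Measure α} (hν : ν ≤ q) (r : ℝ) :
    ∫⁻ y, ENNReal.ofReal (‖y‖ ^ 2) ∂ν
      ≤ ENNReal.ofReal (r ^ 2) * ν univ
        + ∫⁻ y in (closedBall (0 : α) r)ᶜ, ENNReal.ofReal (‖y‖ ^ 2) ∂q := by
  rw [← lintegral_add_compl _ measurableSet_closedBall]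
  gcongr
  · calc ∫⁻ y in closedBall 0 r, ENNReal.ofReal (‖y‖ ^ 2) ∂ν
        ≤ ∫⁻ _ in closedBall 0 r, ENNReal.ofReal (r ^ 2) ∂ν :=
          setLIntegral_mono measurable_const fun y hy => ENNReal.ofReal_le_ofReal
            (pow_le_pow_left₀ (norm_nonneg y) (mem_closedBall_zero_iff.1 hy) 2)
      _ ≤ ENNReal.ofReal (r ^ 2) * ν univ := by
          rw [setLIntegral_const]
          gcongr
          exact subset_univ _

theorem W2sq_add_le_tails (m : Measure α) {q₀ p₀ : Measure α} [IsFiniteMeasure q₀]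
    [IsFiniteMeasure p₀] (h : q₀ univ = p₀ univ) (r : ℝ) :
    W2sq (m + q₀) (m + p₀)
      ≤ 4 * ENNReal.ofReal (r ^ 2) * q₀ univ
        + 2 * ∫⁻ y in (closedBall (0 : α) r)ᶜ, ENNReal.ofReal (‖y‖ ^ 2) ∂(m + q₀)
        + 2 * ∫⁻ y in (closedBall (0 : α) r)ᶜ, ENNReal.ofReal (‖y‖ ^ 2) ∂(m + p₀) := by
  calc W2sq (m + q₀) (m + p₀)
      ≤ 2 * ∫⁻ y, ENNReal.ofReal (‖y‖ ^ 2) ∂q₀ + 2 * ∫⁻ y, ENNReal.ofReal (‖y‖ ^ 2) ∂p₀ :=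
        W2sq_add_le m h
    _ ≤ 2 * (ENNReal.ofReal (r ^ 2) * q₀ univ
            + ∫⁻ y in (closedBall (0 : α) r)ᶜ, ENNReal.ofReal (‖y‖ ^ 2) ∂(m + q₀))
          + 2 * (ENNReal.ofReal (r ^ 2) * p₀ univ
            + ∫⁻ y in (closedBall (0 : α) r)ᶜ, ENNReal.ofReal (‖y‖ ^ 2) ∂(m + p₀)) := by
        gcongr
        · exact lintegral_ofReal_norm_sq_le (Measure.le_add_left (le_refl q₀)) r
        · exact lintegral_ofReal_norm_sq_le (Measure.le_add_left (le_refl p₀)) r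
    _ = _ := by rw [← h]; ring

theorem W2sq_le_tvDist_add_tails (q p : Measure α) [IsProbabilityMeasure q]
    [IsProbabilityMeasure p] (hq : Integrable (fun y => ‖y‖ ^ 2) q)
    (hp : Integrable (fun y => ‖y‖ ^ 2) p) (r : ℝ) :
    W2sq q p ≤ ENNReal.ofReal (4 * r ^ 2 * tvDist q p
      + 2 * ∫ y in (closedBall (0 : α) r)ᶜ, ‖y‖ ^ 2 ∂q
      + 2 * ∫ y in (closedBall (0 : α) r)ᶜ, ‖y‖ ^ 2 ∂p) := by
  obtain ⟨m, q₀, p₀, rfl, rfl, hsing⟩ := Measure.exists_add_eq_add_eq_mutuallySingular q p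
  have : IsFiniteMeasure m := isFiniteMeasure_of_le (m + q₀) (Measure.le_add_right le_rfl)
  have : IsFiniteMeasure q₀ := isFiniteMeasure_of_le (m + q₀) (Measure.le_add_left le_rfl)
  have : IsFiniteMeasure p₀ := isFiniteMeasure_of_le (m + p₀) (Measure.le_add_left le_rfl)
  have hmass : q₀ univ = p₀ univ := by
    have h := (measure_univ (μ := m + q₀)).trans (measure_univ (μ := m + p₀)).symm
    rwa [Measure.add_apply, Measure.add_apply, ENNReal.add_right_inj (measure_ne_top _ _)] at h
  have htail {ν : Measure α} (h : Integrable (fun y => ‖y‖ ^ 2) ν) :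
      ∫⁻ y in (closedBall (0 : α) r)ᶜ, ENNReal.ofReal (‖y‖ ^ 2) ∂ν
        = ENNReal.ofReal (∫ y in (closedBall (0 : α) r)ᶜ, ‖y‖ ^ 2 ∂ν) :=
    (ofReal_integral_eq_lintegral_ofReal h.restrict (ae_of_all _ fun _ => sq_nonneg _)).symm
  calc W2sq (m + q₀) (m + p₀)
      ≤ _ := W2sq_add_le_tails m hmass r
    _ = ENNReal.ofReal (4 * r ^ 2 * (q₀ univ).toReal
          + 2 * ∫ y in (closedBall (0 : α) r)ᶜ, ‖y‖ ^ 2 ∂(m + q₀)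
          + 2 * ∫ y in (closedBall (0 : α) r)ᶜ, ‖y‖ ^ 2 ∂(m + p₀)) := by
        rw [htail hq, htail hp, ENNReal.ofReal_add (by positivity) (by positivity),
          ENNReal.ofReal_add (by positivity) (by positivity), ENNReal.ofReal_mul (by positivity),
          ENNReal.ofReal_mul (by positivity), ENNReal.ofReal_mul (by positivity),
          ENNReal.ofReal_mul (by positivity), ENNReal.ofReal_toReal (measure_ne_top _ _)]
        simp only [ENNReal.ofReal_ofNat]
    _ ≤ _ := by
        gcongr
        exact toReal_measure_univ_le_tvDist hsing

end Tails

theorem w2sq_le_tv_add_tails_general (d : ℕ) (q p : Measure (EuclideanSpace ℝ (Fin d)))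
    [IsProbabilityMeasure q] [IsProbabilityMeasure p]
    (hq2 : Integrable (fun y => ‖y‖ ^ 2) q) (hp2 : Integrable (fun y => ‖y‖ ^ 2) p)
    (r : ℝ) :
    W2sq q p
      ≤ ENNReal.ofReal
          (4 * r ^ 2 * tvDist q p
            + 2 * ∫ y in (Metric.closedBall (0 : EuclideanSpace ℝ (Fin d)) r)ᶜ, ‖y‖ ^ 2 ∂q
            + 2 * ∫ y in (Metric.closedBall (0 : EuclideanSpace ℝ (Fin d)) r)ᶜ, ‖y‖ ^ 2 ∂p
            + 2 * (1 - (p (Metric.closedBall 0 r)).toReal) * ∫ y, ‖y‖ ^ 2 ∂q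
            + 2 * (1 - (q (Metric.closedBall 0 r)).toReal) * ∫ y, ‖y‖ ^ 2 ∂p) := by
  have hextra_nonneg (μ ν : Measure (EuclideanSpace ℝ (Fin d))) [IsProbabilityMeasure μ] :
      0 ≤ 2 * (1 - (μ (closedBall 0 r)).toReal) * ∫ y, ‖y‖ ^ 2 ∂ν :=
    mul_nonneg (mul_nonneg zero_le_two (sub_nonneg.2 measureReal_le_one))
      (integral_nonneg fun _ => sq_nonneg _)
  refine (W2sq_le_tvDist_add_tails q p hq2 hp2 r).trans (ENNReal.ofReal_le_ofReal ?_)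
  linarith [hextra_nonneg p q, hextra_nonneg q p]

/-- **Wasserstein-2 bounded by total variation plus tails**. -/
theorem w2sq_le_tv_add_tails (d : ℕ) (q p : Measure (EuclideanSpace ℝ (Fin d)))
    [IsProbabilityMeasure q] [IsProbabilityMeasure p]
    (hq2 : Integrable (fun y => ‖y‖ ^ 2) q) (hp2 : Integrable (fun y => ‖y‖ ^ 2) p)
    (r : ℝ) (hr : 0 < r) :
    W2sq q p
      ≤ ENNReal.ofReal
          (4 * r ^ 2 * tvDist q p
            + 2 * ∫ y in (Metric.closedBall (0 : EuclideanSpace ℝ (Fin d)) r)ᶜ, ‖y‖ ^ 2 ∂q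
            + 2 * ∫ y in (Metric.closedBall (0 : EuclideanSpace ℝ (Fin d)) r)ᶜ, ‖y‖ ^ 2 ∂p
            + 2 * (1 - (p (Metric.closedBall 0 r)).toReal) * ∫ y, ‖y‖ ^ 2 ∂q
            + 2 * (1 - (q (Metric.closedBall 0 r)).toReal) * ∫ y, ‖y‖ ^ 2 ∂p) :=
  w2sq_le_tv_add_tails_general d q p hq2 hp2 r
end
end

section
/- Truncated second-moment tail bound for product measures: let p_Y be a probability measure on ℝ^L, s > 0, M := ∫ e^{s‖y‖²} dp_Y(y) < ∞, and N > (1/s)·ln M. Then for every n ≥ 1, ∫_{A_n} (Σ_{t=1}^n ‖y_t‖²) dp_Y^{⊗n}(y₁,…,y_n) ≤ nN·e^{−n(sN − ln M)} + (1/s)·M^n·e^{−nsN}, where A_n := {(y₁,…,y_n) : Σ_{t=1}^n ‖y_t‖² > nN}. In particular, this quantity tends to 0 exponentially fast as n → ∞. -/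
open MeasureTheory
open scoped ENNReal

noncomputable section

private lemma lintegral_pi_prod_pow {E : Type*} [MeasurableSpace E] (μ : Measure E)
    [IsProbabilityMeasure μ] (g : E → ℝ≥0∞) (hg : Measurable g) :
    ∀ n : ℕ, (∫⁻ x : Fin n → E, ∏ i, g (x i) ∂(Measure.pi fun _ => μ))
      = (∫⁻ y, g y ∂μ) ^ n := by
  intro n
  induction n with
  | zero => simp
  | succ n ih =>
    have hF : Measurable fun x : Fin (n + 1) → E => ∏ i, g (x i) :=
      Finset.measurable_prod _ fun i _ => hg.comp (measurable_pi_apply i)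
    have h := (measurePreserving_piFinSuccAbove (fun _ : Fin (n + 1) => μ) 0).symm
    rw [← h.lintegral_comp hF]
    simp only [MeasurableEquiv.piFinSuccAbove_symm_apply, Fin.insertNthEquiv,
      Fin.prod_univ_succ, Fin.insertNth_zero, Equiv.coe_fn_mk, Fin.cons_succ,
      Fin.zero_succAbove, cast_eq, Fin.cons_zero]
    have hG : Measurable fun x : Fin n → E => ∏ i, g (x i) :=
      Finset.measurable_prod _ fun i _ => hg.comp (measurable_pi_apply i)
    rw [lintegral_prod_mul hg.aemeasurable hG.aemeasurable, ih, pow_succ, mul_comm]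

/-- **truncated second-moment tail bound for product measures**:
if `M := ∫ e^{s‖y‖²} dp_Y < ∞` and `N > (1/s)·ln M`, then for all `n ≥ 1` the integral of
`∑_t ‖y_t‖²` over `A_n := {∑_t ‖y_t‖² > nN}` under `p_Y^{⊗n}` is at most
`nN·e^{−n(sN − ln M)} + (1/s)·Mⁿ·e^{−nsN}`; in particular it tends to `0`
exponentially fast. -/
theorem truncated_second_moment_tail_bound (L : ℕ)
    (pY : Measure (EuclideanSpace ℝ (Fin L))) [IsProbabilityMeasure pY]
    (s M N : ℝ) (hs : 0 < s)
    (hint : Integrable (fun y => Real.exp (s * ‖y‖ ^ 2)) pY)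
    (hM : M = ∫ y, Real.exp (s * ‖y‖ ^ 2) ∂pY)
    (hN : Real.log M / s < N) :
    (∀ n : ℕ, 1 ≤ n →
      (∫⁻ x in {x : Fin n → EuclideanSpace ℝ (Fin L) | (n : ℝ) * N < ∑ t, ‖x t‖ ^ 2},
          ENNReal.ofReal (∑ t, ‖x t‖ ^ 2) ∂(Measure.pi fun _ : Fin n => pY))
        ≤ ENNReal.ofReal ((n : ℝ) * N * Real.exp (-(n : ℝ) * (s * N - Real.log M))
            + (1 / s) * M ^ n * Real.exp (-(n : ℝ) * s * N))) ∧
    ∃ α : ℝ, 0 < α ∧ ∃ n₀ : ℕ, ∀ n : ℕ, n₀ ≤ n →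
      (∫⁻ x in {x : Fin n → EuclideanSpace ℝ (Fin L) | (n : ℝ) * N < ∑ t, ‖x t‖ ^ 2},
          ENNReal.ofReal (∑ t, ‖x t‖ ^ 2) ∂(Measure.pi fun _ : Fin n => pY))
        ≤ ENNReal.ofReal (Real.exp (-(α * n))) := by
  have hM1 : 1 ≤ M := by
    rw [hM]
    calc (1 : ℝ) = ∫ _, (1 : ℝ) ∂pY := by simp
    _ ≤ ∫ y, Real.exp (s * ‖y‖ ^ 2) ∂pY := by
        refine integral_mono (integrable_const 1) hint fun y => ?_
        exact Real.one_le_exp (by positivity)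
  have hM0 : (0 : ℝ) < M := lt_of_lt_of_le one_pos hM1
  have hlogM : 0 ≤ Real.log M := Real.log_nonneg hM1
  have hN0 : 0 < N := lt_of_le_of_lt (by positivity) hN
  have hδ : 0 < s * N - Real.log M := by
    have := (div_lt_iff₀ hs).mp hN
    linarith
  -- the exponential identity
  have hexp : ∀ n : ℕ, Real.exp (-(n : ℝ) * (s * N - Real.log M))
      = M ^ n * Real.exp (-(n : ℝ) * s * N) := by
    intro n
    rw [show -(n : ℝ) * (s * N - Real.log M) = (n : ℝ) * Real.log M + -(n : ℝ) * s * N by ring,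
      Real.exp_add, Real.exp_nat_mul, Real.exp_log hM0]
  -- measurability of the one-dimensional integrand
  have hgmeas : Measurable fun y : EuclideanSpace ℝ (Fin L) =>
      ENNReal.ofReal (Real.exp (s * ‖y‖ ^ 2)) := by
    exact ENNReal.measurable_ofReal.comp
      (Real.measurable_exp.comp ((measurable_norm.pow_const 2).const_mul s))
  -- value of the one-dimensional lintegral
  have hgint : (∫⁻ y, ENNReal.ofReal (Real.exp (s * ‖y‖ ^ 2)) ∂pY) = ENNReal.ofReal M := by
    rw [hM]
    exact (ofReal_integral_eq_lintegral_ofReal hint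
      (ae_of_all _ fun y => (Real.exp_pos _).le)).symm
  -- the key bound, for every `n`
  have key : ∀ n : ℕ,
      (∫⁻ x in {x : Fin n → EuclideanSpace ℝ (Fin L) | (n : ℝ) * N < ∑ t, ‖x t‖ ^ 2},
          ENNReal.ofReal (∑ t, ‖x t‖ ^ 2) ∂(Measure.pi fun _ : Fin n => pY))
        ≤ ENNReal.ofReal (((n : ℝ) * N + 1 / s) * Real.exp (-(n : ℝ) * s * N) * M ^ n) := by
    intro n
    set S : (Fin n → EuclideanSpace ℝ (Fin L)) → ℝ := fun x => ∑ t, ‖x t‖ ^ 2 with hS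
    have hSmeas : Measurable S :=
      Finset.measurable_sum _ fun t _ =>
        (measurable_norm.comp (measurable_pi_apply t)).pow_const 2
    have hAmeas : MeasurableSet
        {x : Fin n → EuclideanSpace ℝ (Fin L) | (n : ℝ) * N < S x} :=
      measurableSet_lt measurable_const hSmeas
    have hnN : (0 : ℝ) ≤ (n : ℝ) * N := by positivity
    set C : ℝ := ((n : ℝ) * N + 1 / s) * Real.exp (-(n : ℝ) * s * N) with hC
    have hC0 : 0 ≤ C := by positivity
    -- pointwise bound on the set
    have hpt : ∀ x ∈ {x : Fin n → EuclideanSpace ℝ (Fin L) | (n : ℝ) * N < S x},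
        ENNReal.ofReal (S x) ≤ ENNReal.ofReal (C * Real.exp (s * S x)) := by
      intro x hx
      refine ENNReal.ofReal_le_ofReal ?_
      have ha : (n : ℝ) * N < S x := hx
      set u : ℝ := s * (S x - (n : ℝ) * N) with hu
      have hu0 : 0 < u := by
        have : 0 < S x - (n : ℝ) * N := by linarith
        positivity
      have h1 : 1 ≤ Real.exp u := Real.one_le_exp hu0.le
      have h2 : u ≤ Real.exp u := by linarith [Real.add_one_le_exp u]
      have hexpu : C * Real.exp (s * S x) = ((n : ℝ) * N + 1 / s) * Real.exp u := by
        rw [hC, hu, mul_assoc, ← Real.exp_add]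
        ring_nf
      rw [hexpu]
      have hsu : s * (S x - (n : ℝ) * N) ≤ Real.exp u := h2
      have hfrac : S x - (n : ℝ) * N ≤ Real.exp u / s := by
        rw [le_div_iff₀ hs]
        linarith [hsu]
      have hnNe : (n : ℝ) * N ≤ (n : ℝ) * N * Real.exp u := le_mul_of_one_le_right hnN h1
      have : S x ≤ (n : ℝ) * N * Real.exp u + Real.exp u / s := by linarith
      calc S x ≤ (n : ℝ) * N * Real.exp u + Real.exp u / s := this
      _ = ((n : ℝ) * N + 1 / s) * Real.exp u := by ring
    calc
      (∫⁻ x in {x : Fin n → EuclideanSpace ℝ (Fin L) | (n : ℝ) * N < S x},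
          ENNReal.ofReal (S x) ∂(Measure.pi fun _ : Fin n => pY))
        ≤ ∫⁻ x in {x : Fin n → EuclideanSpace ℝ (Fin L) | (n : ℝ) * N < S x},
            ENNReal.ofReal (C * Real.exp (s * S x)) ∂(Measure.pi fun _ : Fin n => pY) :=
          setLIntegral_mono' hAmeas hpt
      _ ≤ ∫⁻ x, ENNReal.ofReal (C * Real.exp (s * S x)) ∂(Measure.pi fun _ : Fin n => pY) :=
          setLIntegral_le_lintegral _ _
      _ = ENNReal.ofReal C *
            ∫⁻ x, ENNReal.ofReal (Real.exp (s * S x)) ∂(Measure.pi fun _ : Fin n => pY) := by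
          simp_rw [ENNReal.ofReal_mul hC0]
          exact lintegral_const_mul _
            (ENNReal.measurable_ofReal.comp (Real.measurable_exp.comp (hSmeas.const_mul s)))
      _ = ENNReal.ofReal C * ENNReal.ofReal M ^ n := by
          congr 1
          have : ∀ x : Fin n → EuclideanSpace ℝ (Fin L),
              ENNReal.ofReal (Real.exp (s * S x))
                = ∏ t, ENNReal.ofReal (Real.exp (s * ‖x t‖ ^ 2)) := by
            intro x
            rw [hS, Finset.mul_sum, Real.exp_sum,
              ENNReal.ofReal_prod_of_nonneg fun t _ => (Real.exp_pos _).le]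
          simp_rw [this]
          rw [lintegral_pi_prod_pow pY _ hgmeas n, hgint]
      _ = ENNReal.ofReal (C * M ^ n) := by
          rw [ENNReal.ofReal_mul hC0, ENNReal.ofReal_pow hM0.le]
  -- first claim
  have part1 : ∀ n : ℕ, 1 ≤ n →
      (∫⁻ x in {x : Fin n → EuclideanSpace ℝ (Fin L) | (n : ℝ) * N < ∑ t, ‖x t‖ ^ 2},
          ENNReal.ofReal (∑ t, ‖x t‖ ^ 2) ∂(Measure.pi fun _ : Fin n => pY))
        ≤ ENNReal.ofReal ((n : ℝ) * N * Real.exp (-(n : ℝ) * (s * N - Real.log M))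
            + (1 / s) * M ^ n * Real.exp (-(n : ℝ) * s * N)) := by
    intro n _
    refine (key n).trans (le_of_eq ?_)
    congr 1
    rw [hexp n]
    ring
  refine ⟨part1, (s * N - Real.log M) / 2, by linarith, ?_⟩
  set δ : ℝ := s * N - Real.log M with hδdef
  refine ⟨max 1 ⌈16 * (N + 1 / s) / δ ^ 2⌉₊, fun n hn => ?_⟩
  have hn1 : 1 ≤ n := le_trans (le_max_left _ _) hn
  have hnc : 16 * (N + 1 / s) / δ ^ 2 ≤ (n : ℝ) := by
    calc 16 * (N + 1 / s) / δ ^ 2 ≤ (⌈16 * (N + 1 / s) / δ ^ 2⌉₊ : ℝ) := Nat.le_ceil _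
    _ ≤ (n : ℝ) := by
        exact_mod_cast le_trans (le_max_right 1 _) hn
  refine (key n).trans ?_
  refine ENNReal.ofReal_le_ofReal ?_
  -- reduce to a real inequality
  have hMn : M ^ n * Real.exp (-(n : ℝ) * s * N) = Real.exp (-(n : ℝ) * δ) := by
    rw [hδdef, hexp n]
  have hgoal : ((n : ℝ) * N + 1 / s) * Real.exp (-(n : ℝ) * s * N) * M ^ n
      = ((n : ℝ) * N + 1 / s) * Real.exp (-(n : ℝ) * δ) := by
    rw [← hMn]; ring
  rw [hgoal]
  have hrhs : Real.exp (-(δ / 2 * (n : ℝ)))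
      = Real.exp ((n : ℝ) * δ / 2) * Real.exp (-(n : ℝ) * δ) := by
    rw [← Real.exp_add]; ring_nf
  rw [hrhs]
  refine mul_le_mul_of_nonneg_right ?_ (Real.exp_pos _).le
  -- need: n N + 1/s ≤ exp (n δ / 2)
  have hq : (n : ℝ) * δ / 4 ≤ Real.exp ((n : ℝ) * δ / 4) := by
    linarith [Real.add_one_le_exp ((n : ℝ) * δ / 4)]
  have hq0 : (0 : ℝ) ≤ (n : ℝ) * δ / 4 := by positivity
  have hsq : ((n : ℝ) * δ / 4) ^ 2 ≤ Real.exp ((n : ℝ) * δ / 4) ^ 2 :=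
    pow_le_pow_left₀ hq0 hq 2
  have hexp2 : Real.exp ((n : ℝ) * δ / 4) ^ 2 = Real.exp ((n : ℝ) * δ / 2) := by
    rw [sq, ← Real.exp_add]; ring_nf
  have hn1' : (1 : ℝ) ≤ (n : ℝ) := by exact_mod_cast hn1
  have hδ2 : (0 : ℝ) < δ ^ 2 := by positivity
  have hnbig : 16 * (N + 1 / s) ≤ (n : ℝ) * δ ^ 2 := by
    have := (div_le_iff₀ hδ2).mp hnc
    linarith
  have hs1 : 0 < 1 / s := by positivity
  have : (n : ℝ) * N + 1 / s ≤ ((n : ℝ) * δ / 4) ^ 2 := by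
    have h1 : (n : ℝ) * N + 1 / s ≤ (n : ℝ) * (N + 1 / s) := by
      nlinarith
    have h2 : (n : ℝ) * (N + 1 / s) ≤ (n : ℝ) * ((n : ℝ) * δ ^ 2 / 16) := by
      have hN1s : 0 ≤ N + 1 / s := by positivity
      have : N + 1 / s ≤ (n : ℝ) * δ ^ 2 / 16 := by linarith
      exact mul_le_mul_of_nonneg_left this (by positivity)
    calc (n : ℝ) * N + 1 / s ≤ (n : ℝ) * ((n : ℝ) * δ ^ 2 / 16) := le_trans h1 h2
    _ = ((n : ℝ) * δ / 4) ^ 2 := by ring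
  calc (n : ℝ) * N + 1 / s ≤ ((n : ℝ) * δ / 4) ^ 2 := this
  _ ≤ Real.exp ((n : ℝ) * δ / 4) ^ 2 := hsq
  _ = Real.exp ((n : ℝ) * δ / 2) := hexp2
  _ = Real.exp ((n : ℝ) * δ / 2) := rfl
end
end
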